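/- Let p = Σ_{i=1}^n αᵢ · unif(m - 1/(2εᵢ), m + 1/(2εᵢ)) with αᵢ > 0, Σαᵢ = 1, εᵢ > 0, and r = max_{i,j} εᵢ²/εⱼ². Then e^{2h(p)}/(2πe) ≤ Var(X) ≤ (M(r)/12) e^{2h(p)}. -/

import Mathlib

/-!
The lower bound is the maximum-entropy property of the Gaussian: Gibbs' inequality against the
Gaussian density with the variance `v` of `p` gives `h(p) ≤ log (2πe v) / 2`.
For the upper bound, concavity of `-x log x` gives `h(p) ≥ ∑ αᵢ h(unifᵢ) = ∑ αᵢ log (1/εᵢ)`, while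
`Var = ∑ αᵢ εᵢ⁻² / 12`. Specht's inequality bounds the weighted arithmetic mean of the `εᵢ⁻²` by
`M(r)` times their weighted geometric mean `exp (2 ∑ αᵢ log (1/εᵢ)) ≤ e^{2h(p)}`.
-/

noncomputable def M (r : ℝ) : ℝ :=
  if r = 1 then 1 else (r - 1) * r ^ (1 / (r - 1)) / (Real.exp 1 * Real.log r)

open MeasureTheory Real Finset ProbabilityTheory

section Entropy

variable {Ω : Type*} [MeasurableSpace Ω] {μ : Measure Ω}

lemma integrable_mul_log_of_bounded {f : Ω → ℝ} {s : Set Ω} {B : ℝ} (hf : Measurable f)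
    (hf0 : ∀ x, 0 ≤ f x) (hfB : ∀ x, f x ≤ B) (hs : μ s ≠ ⊤) (hfs : ∀ x ∉ s, f x = 0) :
    Integrable (fun x => f x * log (f x)) μ := by
  obtain ⟨C, hC⟩ := isCompact_Icc.exists_bound_of_continuousOn
    (continuous_mul_log.continuousOn (s := Set.Icc 0 B))
  refine IntegrableOn.integrable_of_forall_notMem_eq_zero (s := s) ?_
    fun x hx => by simp [hfs x hx]
  exact Measure.integrableOn_of_bounded hs (hf.mul hf.log).aestronglyMeasurable
    (ae_of_all _ fun x => hC (f x) ⟨hf0 x, hfB x⟩)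

lemma mul_log_sub_mul_log_le {p q : ℝ} (hp : 0 ≤ p) (hq : 0 < q) :
    p * log q - p * log p ≤ q - p := by
  rcases hp.eq_or_lt with rfl | hp
  · simpa using hq.le
  · have h := mul_le_mul_of_nonneg_left (log_le_sub_one_of_pos (div_pos hq hp)) hp.le
    rw [log_div hq.ne' hp.ne', mul_sub_one, mul_div_cancel₀ _ hp.ne'] at h
    linarith

/-- Gibbs' inequality. -/
lemma integral_mul_log_le_integral_mul_log {p q : Ω → ℝ} (hp0 : ∀ x, 0 ≤ p x)
    (hq0 : ∀ x, 0 < q x) (hp : Integrable p μ) (hq : Integrable q μ)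
    (hpq : Integrable (fun x => p x * log (q x)) μ) (hpp : Integrable (fun x => p x * log (p x)) μ)
    (hmass : ∫ x, q x ∂μ ≤ ∫ x, p x ∂μ) :
    ∫ x, p x * log (q x) ∂μ ≤ ∫ x, p x * log (p x) ∂μ := by
  have h := integral_mono (hpq.sub hpp) (hq.sub hp) fun x => mul_log_sub_mul_log_le (hp0 x) (hq0 x)
  simp only [Pi.sub_apply] at h
  rw [integral_sub hpq hpp, integral_sub hq hp] at h
  linarith

lemma sum_mul_integral_negMulLog_le {ι : Type*} [Fintype ι] {w : ι → ℝ} {f : ι → Ω → ℝ}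
    (hw0 : ∀ i, 0 ≤ w i) (hw1 : ∑ i, w i = 1) (hf0 : ∀ i x, 0 ≤ f i x)
    (hf : ∀ i, Integrable (fun x => negMulLog (f i x)) μ)
    (hmix : Integrable (fun x => negMulLog (∑ i, w i * f i x)) μ) :
    ∑ i, w i * ∫ x, negMulLog (f i x) ∂μ ≤ ∫ x, negMulLog (∑ i, w i * f i x) ∂μ := by
  simp_rw [← integral_const_mul]
  rw [← integral_finsetSum _ fun i _ => (hf i).const_mul _]
  refine integral_mono (integrable_finsetSum _ fun i _ => (hf i).const_mul _) hmix fun x => ?_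
  simpa using concaveOn_negMulLog.le_map_sum (t := univ) (p := fun i => f i x)
    (fun i _ => hw0 i) hw1 fun i _ => Set.mem_Ici.2 (hf0 i x)

end Entropy

lemma exp_two_mul_entropy_le_of_variance {p : ℝ → ℝ} {m v : ℝ} (hv : 0 < v)
    (hp0 : ∀ x, 0 ≤ p x) (hp : Integrable p) (hp1 : ∫ x, p x = 1)
    (hvi : Integrable fun x => (x - m) ^ 2 * p x) (hvar : ∫ x, (x - m) ^ 2 * p x = v)
    (hpp : Integrable fun x => p x * log (p x)) :
    exp (2 * -∫ x, p x * log (p x)) ≤ 2 * π * exp 1 * v := by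
  lift v to NNReal using hv.le
  have hv0 : v ≠ 0 := by simpa using hv.ne'
  have hlog : ∀ x, p x * log (gaussianPDFReal m v x) =
      -(2 * (v : ℝ))⁻¹ * ((x - m) ^ 2 * p x) - log √(2 * π * v) * p x := by
    intro x
    rw [gaussianPDFReal_def, log_mul (by positivity) (exp_pos _).ne', log_inv, log_exp]
    ring
  have hpg : Integrable fun x => p x * log (gaussianPDFReal m v x) := by
    simp_rw [hlog]; exact (hvi.const_mul _).sub (hp.const_mul _)
  have hgibbs := integral_mul_log_le_integral_mul_log hp0 (gaussianPDFReal_pos m v · hv0) hp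
    (integrable_gaussianPDFReal m v) hpg hpp (by rw [integral_gaussianPDFReal_eq_one m hv0, hp1])
  simp_rw [hlog] at hgibbs
  rw [integral_sub (hvi.const_mul _) (hp.const_mul _), integral_const_mul, integral_const_mul,
    hvar, hp1, log_sqrt (by positivity), neg_mul, inv_mul_eq_div,
    div_mul_cancel_right₀ hv.ne'] at hgibbs
  calc exp (2 * -∫ x, p x * log (p x)) ≤ exp (1 + log (2 * π * v)) := by gcongr; linarith
    _ = 2 * π * exp 1 * v := by rw [exp_add, exp_log (by positivity)]; ring

lemma M_eq_exp_sub_one_div {r : ℝ} (hr : 1 < r) :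
    M r = exp (log r / (r - 1) - 1) / (log r / (r - 1)) := by
  rw [M, if_neg hr.ne', rpow_def_of_pos (by linarith), exp_sub, mul_one_div]
  field_simp

lemma sub_one_mul_log_div_sub_one_le_log {r t : ℝ} (hr : 1 < r) (ht1 : 1 ≤ t) (htr : t ≤ r) :
    (t - 1) * (log r / (r - 1)) ≤ log t := by
  have hr1 : 0 < r - 1 := by linarith
  have h := strictConcaveOn_log_Ioi.concaveOn.2 (Set.mem_Ioi.2 one_pos)
    (Set.mem_Ioi.2 (by linarith : (0 : ℝ) < r)) (div_nonneg (by linarith : 0 ≤ r - t) hr1.le)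
    (div_nonneg (by linarith : 0 ≤ t - 1) hr1.le) (by field_simp; ring)
  have hcomb : ((r - t) / (r - 1)) • (1 : ℝ) + ((t - 1) / (r - 1)) • r = t := by
    simp only [smul_eq_mul]; field_simp; ring
  rw [hcomb, log_one, smul_zero, zero_add, smul_eq_mul] at h
  calc (t - 1) * (log r / (r - 1)) = (t - 1) / (r - 1) * log r := by ring
    _ ≤ log t := h

lemma M_pos {r : ℝ} (hr : 0 < r) : 0 < M r := by
  unfold M
  split_ifs with h1
  · exact one_pos
  rcases lt_or_gt_of_ne h1 with h | h
  · exact div_pos_of_neg_of_neg (mul_neg_of_neg_of_pos (by linarith) (rpow_pos_of_pos hr _))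
      (mul_neg_of_pos_of_neg (exp_pos 1) (log_neg hr h))
  · exact div_pos (mul_pos (by linarith) (rpow_pos_of_pos hr _)) (mul_pos (exp_pos 1) (log_pos h))

/- With `a = min x` and `c = log r / (r - 1)`, the chord of `log` on `[a, r a]` gives
`G ≥ log a + c (A / a - 1)`; conclude with `t c ≤ exp (t c - 1)` at `t = A / a`. -/
lemma arith_mean_le_M_mul_exp_of_one_lt {ι : Type*} [Fintype ι] {w x : ι → ℝ} {r : ℝ}
    (hr : 1 < r) (hw0 : ∀ i, 0 ≤ w i) (hw1 : ∑ i, w i = 1) (hx : ∀ i, 0 < x i)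
    (hxr : ∀ i j, x i / x j ≤ r) :
    ∑ i, w i * x i ≤ M r * exp (∑ i, w i * log (x i)) := by
  obtain ⟨k, -, hk⟩ := exists_min_image univ x (nonempty_of_sum_ne_zero (hw1 ▸ one_ne_zero))
  set a := x k
  set c := log r / (r - 1)
  set A := ∑ i, w i * x i
  set G := ∑ i, w i * log (x i)
  have ha : 0 < a := hx k
  have hc : 0 < c := div_pos (log_pos hr) (by linarith)
  have hchord : (A / a - 1) * c ≤ G - log a := calc
    (A / a - 1) * c = (A / a - ∑ i, w i) * c := by rw [hw1]
    _ = ∑ i, w i * ((x i / a - 1) * c) := by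
      rw [sum_div, ← sum_sub_distrib, sum_mul]
      exact sum_congr rfl fun i _ => by ring
    _ ≤ ∑ i, w i * log (x i / a) := by
      refine sum_le_sum fun i _ => mul_le_mul_of_nonneg_left ?_ (hw0 i)
      exact sub_one_mul_log_div_sub_one_le_log hr ((one_le_div ha).2 (hk i (mem_univ i))) (hxr i k)
    _ = G - log a := by
      simp only [log_div (hx _).ne' ha.ne', mul_sub, sum_sub_distrib, ← sum_mul, hw1, one_mul, G]
  have key : A / a * c ≤ exp (c - 1) * exp G / a := calc
    A / a * c ≤ exp (A / a * c - 1) := by linarith [add_one_le_exp (A / a * c - 1)]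
    _ ≤ exp (c - 1 + G - log a) := exp_le_exp.2 (by linarith [sub_one_mul (A / a) c])
    _ = exp (c - 1) * exp G / a := by rw [exp_sub, exp_add, exp_log ha]
  rw [div_mul_eq_mul_div, div_le_div_iff_of_pos_right ha] at key
  rwa [M_eq_exp_sub_one_div hr, div_mul_eq_mul_div, le_div_iff₀ hc]

/-- Specht's inequality: `exp (∑ i, w i * log (x i))` is the weighted geometric mean. -/
lemma arith_mean_le_M_mul_exp {ι : Type*} [Fintype ι] {w x : ι → ℝ} {r : ℝ}
    (hw0 : ∀ i, 0 ≤ w i) (hw1 : ∑ i, w i = 1) (hx : ∀ i, 0 < x i)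
    (hxr : ∀ i j, x i / x j ≤ r) :
    ∑ i, w i * x i ≤ M r * exp (∑ i, w i * log (x i)) := by
  obtain ⟨k, -⟩ := nonempty_of_sum_ne_zero (hw1 ▸ one_ne_zero)
  have hr : 1 ≤ r := by simpa [div_self (hx k).ne'] using hxr k k
  rcases hr.eq_or_lt with rfl | hr
  · have hxk : ∀ i, x i = x k := fun i =>
      le_antisymm ((div_le_one (hx k)).1 (hxr i k)) ((div_le_one (hx i)).1 (hxr k i))
    simp only [hxk, ← sum_mul, hw1, one_mul, exp_log (hx k), M, if_true, le_refl]
  · exact arith_mean_le_M_mul_exp_of_one_lt hr hw0 hw1 hx hxr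

/-- The density of `unif(m - 1/(2ε), m + 1/(2ε))`. -/
noncomputable def centeredUniformDensity (m ε x : ℝ) : ℝ :=
  if |x - m| ≤ 1 / (2 * ε) then ε else 0

namespace centeredUniformDensity

variable {m ε : ℝ}

lemma eq_indicator (m ε : ℝ) : centeredUniformDensity m ε =
    (Set.Icc (m - 1 / (2 * ε)) (m + 1 / (2 * ε))).indicator fun _ => ε := by
  ext x
  simp only [centeredUniformDensity, Set.indicator_apply, Set.mem_Icc, abs_le]
  congr 1
  exact propext ⟨fun h => ⟨by linarith, by linarith⟩, fun h => ⟨by linarith, by linarith⟩⟩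

lemma nonneg (hε : 0 ≤ ε) (x : ℝ) : 0 ≤ centeredUniformDensity m ε x := by
  unfold centeredUniformDensity; split_ifs <;> simp [hε]

lemma apply_le (hε : 0 ≤ ε) (x : ℝ) : centeredUniformDensity m ε x ≤ ε := by
  unfold centeredUniformDensity; split_ifs <;> simp [hε]

lemma measurable (m ε : ℝ) : Measurable (centeredUniformDensity m ε) := by
  rw [eq_indicator]; exact measurable_const.indicator measurableSet_Icc

lemma integrable_mul {g : ℝ → ℝ} (hg : Continuous g) :
    Integrable fun x => g x * centeredUniformDensity m ε x := by
  simp_rw [eq_indicator, ← Set.indicator_mul_right]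
  exact (hg.mul continuous_const).integrableOn_Icc.integrable_indicator measurableSet_Icc

lemma integral_mul (hε : 0 ≤ ε) (g : ℝ → ℝ) :
    ∫ x, g x * centeredUniformDensity m ε x =
      ε * ∫ x in (m - 1 / (2 * ε))..(m + 1 / (2 * ε)), g x := by
  simp_rw [eq_indicator, ← Set.indicator_mul_right]
  rw [integral_indicator measurableSet_Icc, integral_Icc_eq_integral_Ioc,
    ← intervalIntegral.integral_of_le (by linarith [show 0 ≤ 1 / (2 * ε) by positivity]),
    intervalIntegral.integral_mul_const, mul_comm]

lemma integral_eq_one (hε : 0 < ε) : ∫ x, centeredUniformDensity m ε x = 1 := by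
  have h := integral_mul (m := m) hε.le fun _ => 1
  simp only [one_mul] at h
  rw [h, intervalIntegral.integral_const, smul_eq_mul]
  field_simp
  ring

lemma integral_sq_mul (hε : 0 < ε) :
    ∫ x, (x - m) ^ 2 * centeredUniformDensity m ε x = (12 * ε ^ 2)⁻¹ := by
  rw [integral_mul hε.le, intervalIntegral.integral_comp_sub_right (· ^ 2), add_sub_cancel_left,
    sub_sub_cancel_left, integral_pow]
  have := hε.ne'
  norm_num
  field_simp
  ring

lemma negMulLog_comp (m ε : ℝ) : negMulLog ∘ centeredUniformDensity m ε =
    (Set.Icc (m - 1 / (2 * ε)) (m + 1 / (2 * ε))).indicator fun _ => negMulLog ε := by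
  rw [eq_indicator, ← Set.indicator_comp_of_zero negMulLog_zero]
  rfl

lemma integrable_negMulLog (m ε : ℝ) :
    Integrable fun x => negMulLog (centeredUniformDensity m ε x) := by
  change Integrable (negMulLog ∘ centeredUniformDensity m ε)
  rw [negMulLog_comp]
  exact (integrableOn_const measure_Icc_lt_top.ne).integrable_indicator measurableSet_Icc

lemma integral_negMulLog (hε : 0 < ε) :
    ∫ x, negMulLog (centeredUniformDensity m ε x) = -log ε := by
  change ∫ x : ℝ, (negMulLog ∘ centeredUniformDensity m ε) x = _
  rw [negMulLog_comp, integral_indicator measurableSet_Icc, setIntegral_const, Real.volume_real_Icc,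
    smul_eq_mul, negMulLog, max_eq_left (by linarith [show 0 ≤ 1 / (2 * ε) by positivity])]
  field_simp
  ring

end centeredUniformDensity

noncomputable def uniformMixtureDensity {ι : Type*} [Fintype ι] (m : ℝ) (α ε : ι → ℝ) (x : ℝ) : ℝ :=
  ∑ i, α i * centeredUniformDensity m (ε i) x

namespace uniformMixtureDensity

variable {ι : Type*} [Fintype ι] {m : ℝ} {α ε : ι → ℝ}

lemma nonneg (hα : ∀ i, 0 ≤ α i) (hε : ∀ i, 0 ≤ ε i) (x : ℝ) :
    0 ≤ uniformMixtureDensity m α ε x :=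
  sum_nonneg fun i _ => mul_nonneg (hα i) (centeredUniformDensity.nonneg (hε i) x)

lemma le_sum_mul (hα : ∀ i, 0 ≤ α i) (hε : ∀ i, 0 ≤ ε i) (x : ℝ) :
    uniformMixtureDensity m α ε x ≤ ∑ i, α i * ε i :=
  sum_le_sum fun i _ => mul_le_mul_of_nonneg_left (centeredUniformDensity.apply_le (hε i) x) (hα i)

lemma measurable (m : ℝ) (α ε : ι → ℝ) : Measurable (uniformMixtureDensity m α ε) :=
  Finset.measurable_sum _ fun i _ => (centeredUniformDensity.measurable m (ε i)).const_mul _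

lemma eq_zero_of_notMem_Icc (hε : ∀ i, 0 ≤ ε i) {x : ℝ}
    (hx : x ∉ Set.Icc (m - ∑ i, 1 / (2 * ε i)) (m + ∑ i, 1 / (2 * ε i))) :
    uniformMixtureDensity m α ε x = 0 := by
  refine sum_eq_zero fun i _ => ?_
  rw [centeredUniformDensity, if_neg, mul_zero]
  have hi := single_le_sum (f := fun j => 1 / (2 * ε j)) (fun j _ => by have := hε j; positivity)
    (mem_univ i)
  rw [abs_le]
  exact fun h => hx ⟨by linarith, by linarith⟩

lemma integrable_mul {g : ℝ → ℝ} (hg : Continuous g) :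
    Integrable fun x => g x * uniformMixtureDensity m α ε x := by
  simp only [uniformMixtureDensity, mul_sum]
  exact integrable_finsetSum _ fun i _ => by
    simpa only [mul_left_comm] using (centeredUniformDensity.integrable_mul hg).const_mul (α i)

lemma integral_mul {g : ℝ → ℝ} (hg : Continuous g) :
    ∫ x, g x * uniformMixtureDensity m α ε x =
      ∑ i, α i * ∫ x, g x * centeredUniformDensity m (ε i) x := by
  simp only [uniformMixtureDensity, mul_sum]
  rw [integral_finsetSum _ fun i _ => ?_]
  · simp_rw [mul_left_comm (g _), integral_const_mul]
  · simpa only [mul_left_comm] using (centeredUniformDensity.integrable_mul hg).const_mul (α i)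

lemma integrable : Integrable (uniformMixtureDensity m α ε) := by
  simpa using integrable_mul (m := m) (α := α) (ε := ε) continuous_const (g := fun _ => 1)

lemma integral_eq_one (hε : ∀ i, 0 < ε i) (hα : ∑ i, α i = 1) :
    ∫ x, uniformMixtureDensity m α ε x = 1 := by
  simpa [centeredUniformDensity.integral_eq_one (hε _), hα] using
    integral_mul (m := m) (α := α) (ε := ε) continuous_const (g := fun _ => 1)

lemma integral_sq_mul (hε : ∀ i, 0 < ε i) :
    ∫ x, (x - m) ^ 2 * uniformMixtureDensity m α ε x = ∑ i, α i * (12 * ε i ^ 2)⁻¹ := by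
  rw [integral_mul (by fun_prop)]
  simp only [centeredUniformDensity.integral_sq_mul (hε _)]

lemma integrable_mul_log (hα : ∀ i, 0 ≤ α i) (hε : ∀ i, 0 ≤ ε i) :
    Integrable fun x => uniformMixtureDensity m α ε x * log (uniformMixtureDensity m α ε x) :=
  integrable_mul_log_of_bounded (measurable m α ε) (nonneg hα hε) (le_sum_mul hα hε)
    measure_Icc_lt_top.ne fun _ => eq_zero_of_notMem_Icc hε

lemma sum_mul_neg_log_le_entropy (hα : ∀ i, 0 ≤ α i) (hε : ∀ i, 0 < ε i) (hα1 : ∑ i, α i = 1) :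
    ∑ i, α i * -log (ε i) ≤
      -∫ x, uniformMixtureDensity m α ε x * log (uniformMixtureDensity m α ε x) := by
  have h := sum_mul_integral_negMulLog_le hα hα1 (fun i => centeredUniformDensity.nonneg (hε i).le)
    (fun i => centeredUniformDensity.integrable_negMulLog m (ε i))
    (by simpa only [negMulLog_eq_neg, uniformMixtureDensity] using
      (integrable_mul_log hα fun i => (hε i).le).fun_neg)
  simp only [centeredUniformDensity.integral_negMulLog (hε _)] at h
  simpa only [negMulLog_eq_neg, integral_neg, uniformMixtureDensity] using h

end uniformMixtureDensity

theorem uniform_mixture_variance_bounds_general (n : ℕ) (m : ℝ)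
    (ε α : Fin n → ℝ) (r : ℝ)
    (hε : ∀ i, 0 < ε i) (hα : ∀ i, 0 < α i) (hsum : ∑ i, α i = 1)
    (hr : ∀ i j, (ε i) ^ 2 / (ε j) ^ 2 ≤ r)
    (p : ℝ → ℝ)
    (hp : ∀ x, p x = ∑ i, α i * (if |x - m| ≤ 1 / (2 * ε i) then ε i else 0)) :
    Real.exp (2 * (-∫ x : ℝ, p x * Real.log (p x))) / (2 * Real.pi * Real.exp 1) ≤
        (∫ x : ℝ, (x - m) ^ 2 * p x) ∧
    (∫ x : ℝ, (x - m) ^ 2 * p x) ≤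
        M r / 12 * Real.exp (2 * (-∫ x : ℝ, p x * Real.log (p x))) := by
  obtain rfl : p = uniformMixtureDensity m α ε := funext hp
  have hα0 : ∀ i, 0 ≤ α i := fun i => (hα i).le
  have hε0 : ∀ i, 0 ≤ ε i := fun i => (hε i).le
  obtain ⟨k, -⟩ := nonempty_of_sum_ne_zero (hsum ▸ one_ne_zero)
  have hvar := uniformMixtureDensity.integral_sq_mul (m := m) (α := α) (ε := ε) hε
  have hentropy := uniformMixtureDensity.sum_mul_neg_log_le_entropy (m := m) hα0 hε hsum
  have hspecht := arith_mean_le_M_mul_exp hα0 hsum (x := fun i => (ε i ^ 2)⁻¹)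
    (fun i => by have := hε i; positivity) fun i j => by simpa only [inv_div_inv] using hr j i
  have hV : 0 < ∑ i, α i * (12 * ε i ^ 2)⁻¹ :=
    sum_pos (fun i _ => by have := hα i; have := hε i; positivity) ⟨k, mem_univ k⟩
  constructor
  · rw [div_le_iff₀ (by positivity), hvar]
    refine (exp_two_mul_entropy_le_of_variance hV (uniformMixtureDensity.nonneg hα0 hε0)
      uniformMixtureDensity.integrable (uniformMixtureDensity.integral_eq_one hε hsum)
      (uniformMixtureDensity.integrable_mul (by fun_prop)) hvar
      (uniformMixtureDensity.integrable_mul_log hα0 hε0)).trans_eq (by ring)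
  · have hlog : ∑ i, α i * log (ε i ^ 2)⁻¹ = 2 * ∑ i, α i * -log (ε i) := by
      rw [mul_sum]; exact sum_congr rfl fun i _ => by rw [log_inv, log_pow]; push_cast; ring
    have hr1 : 1 ≤ r := by simpa [div_self (pow_pos (hε k) 2).ne'] using hr k k
    have hM := M_pos (r := r) (by linarith)
    calc ∫ x, (x - m) ^ 2 * uniformMixtureDensity m α ε x = (∑ i, α i * (ε i ^ 2)⁻¹) / 12 := by
          rw [hvar, sum_div]; exact sum_congr rfl fun i _ => by ring
      _ ≤ M r * exp (2 * ∑ i, α i * -log (ε i)) / 12 := by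
          rw [← hlog]; exact div_le_div_of_nonneg_right hspecht (by norm_num)
      _ ≤ M r / 12 * exp (2 * -∫ x, _) := by rw [div_mul_eq_mul_div]; gcongr

/-- Variance bounds for a symmetric unimodal mixture of uniform densities:
`e^{2h(p)}/(2πe) ≤ Var(X) ≤ (M(r)/12) e^{2h(p)}` where `r` is the maximum ratio
`εᵢ²/εⱼ²`. -/
theorem uniform_mixture_variance_bounds (n : ℕ) (hn : 0 < n) (m : ℝ)
    (ε α : Fin n → ℝ) (r : ℝ)
    (hε : ∀ i, 0 < ε i) (hα : ∀ i, 0 < α i) (hsum : ∑ i, α i = 1)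
    (hr : ∀ i j, (ε i) ^ 2 / (ε j) ^ 2 ≤ r) (hr' : ∃ i j, (ε i) ^ 2 / (ε j) ^ 2 = r)
    (p : ℝ → ℝ)
    (hp : ∀ x, p x = ∑ i, α i * (if |x - m| ≤ 1 / (2 * ε i) then ε i else 0)) :
    Real.exp (2 * (-∫ x : ℝ, p x * Real.log (p x))) / (2 * Real.pi * Real.exp 1) ≤
        (∫ x : ℝ, (x - m) ^ 2 * p x) ∧
    (∫ x : ℝ, (x - m) ^ 2 * p x) ≤
        M r / 12 * Real.exp (2 * (-∫ x : ℝ, p x * Real.log (p x))) :=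
  uniform_mixture_variance_bounds_general n m ε α r hε hα hsum hr p hp
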